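/- Let n ≥ 1, let w ∈ W have underlying permutation σ₀ and negated-index set B with |B| = k. Form the sequence s = (σ₀(1), …, σ₀(n)); let a₁, …, a_{n−k} be the subsequence of entries of s not lying in B, and let b₁, …, b_k be the subsequence of entries of s lying in B (both in the order they appear in s). Define the permutation η ∈ Sₙ by η(t) = a_t for 1 ≤ t ≤ n−k and η(n−k+t) = b_{k+1−t} for 1 ≤ t ≤ k (i.e. one-line notation: the entries of s outside B in order, followed by the entries of B in reverse order of appearance). Then Φ_w ∩ Φ⁺⁰ = Φ_η. -/

import Mathlib

open Pointwise

def stdBasis (n : ℕ) (i : Fin n) : Fin n → ℤ := Pi.single i 1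

def PhiPos (n : ℕ) : Set (Fin n → ℤ) :=
  {v | ∃ i j : Fin n, i < j ∧ v = stdBasis n i - stdBasis n j} ∪
  {v | ∃ i j : Fin n, i ≤ j ∧ v = stdBasis n i + stdBasis n j}

def IsSigned {n : ℕ} (w : (Fin n → ℤ) ≃ₗ[ℤ] (Fin n → ℤ)) : Prop :=
  ∀ j : Fin n, ∃ i : Fin n,
    w (stdBasis n j) = stdBasis n i ∨ w (stdBasis n j) = - stdBasis n i

def PhiW {n : ℕ} (w : (Fin n → ℤ) ≃ₗ[ℤ] (Fin n → ℤ)) : Set (Fin n → ℤ) :=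
  (⇑w '' (-(PhiPos n))) ∩ PhiPos n

def permL {n : ℕ} (σ : Equiv.Perm (Fin n)) : (Fin n → ℤ) ≃ₗ[ℤ] (Fin n → ℤ) where
  toFun v := fun i => v (σ.symm i)
  invFun v := fun i => v (σ i)
  map_add' _ _ := rfl
  map_smul' _ _ := rfl
  left_inv v := by funext i; simp
  right_inv v := by funext i; simp

def Phi0 (n : ℕ) : Set (Fin n → ℤ) :=
  {v | ∃ i j : Fin n, i < j ∧ v = stdBasis n i - stdBasis n j}

/-!
Since `w⁻¹ eᵢ = ±e_{σ₀⁻¹ i}`, with sign `-` exactly for `i ∈ B`, a root `eᵢ - eⱼ` (`i < j`) lies in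
`Φ_w` exactly when `j` precedes `i` in the order listing the letters outside `B` by their position
in `s`, followed by the letters of `B` by reverse position. The one-line word of `η` is sorted for
this order, and for a permutation `eᵢ - eⱼ ∈ Φ_η` means that `j` comes before `i` in its one-line
word, while `Φ_η` contains no root `eᵢ + eⱼ`.
-/

theorem lt_iff_of_forall_lt_imp {ι α : Type*} [LinearOrder ι] {r : α → α → Prop} [Std.Asymm r]
    {f : ι → α} (hf : ∀ i j, i < j → r (f i) (f j)) {i j : ι} : i < j ↔ r (f i) (f j) := by
  refine ⟨hf i j, fun h => ?_⟩
  rcases lt_trichotomy i j with hij | rfl | hji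
  · exact hij
  · exact absurd h (Std.Asymm.asymm _ _ h)
  · exact absurd (hf j i hji) (Std.Asymm.asymm _ _ h)

section Roots

variable {n : ℕ}

theorem sum_stdBasis (i : Fin n) : ∑ k, stdBasis n i k = 1 := by
  simp [stdBasis]

theorem sum_nonneg_of_mem_PhiPos {v : Fin n → ℤ} (hv : v ∈ PhiPos n) : 0 ≤ ∑ k, v k := by
  rcases hv with ⟨i, j, -, rfl⟩ | ⟨i, j, -, rfl⟩ <;>
    simp [Finset.sum_sub_distrib, Finset.sum_add_distrib, sum_stdBasis]

theorem neg_stdBasis_sub_not_mem_PhiPos (p q : Fin n) :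
    -stdBasis n p - stdBasis n q ∉ PhiPos n := fun h => by
  simpa [Finset.sum_sub_distrib, sum_stdBasis] using sum_nonneg_of_mem_PhiPos h

theorem stdBasis_add_mem_PhiPos (p q : Fin n) : stdBasis n p + stdBasis n q ∈ PhiPos n := by
  rcases le_total p q with h | h
  · exact Or.inr ⟨p, q, h, rfl⟩
  · exact Or.inr ⟨q, p, h, add_comm _ _⟩

theorem stdBasis_sub_ne_add (p q a b : Fin n) :
    stdBasis n p - stdBasis n q ≠ stdBasis n a + stdBasis n b := fun h => by
  simpa [Finset.sum_sub_distrib, Finset.sum_add_distrib, sum_stdBasis] using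
    congrArg (fun v => ∑ k, v k) h

theorem eq_of_stdBasis_sub_eq {p q a b : Fin n} (hpq : p ≠ q) (hab : a ≠ b)
    (h : stdBasis n p - stdBasis n q = stdBasis n a - stdBasis n b) : p = a ∧ q = b := by
  have hp := congrFun h p
  have hq := congrFun h q
  simp only [stdBasis, Pi.sub_apply, Pi.single_apply] at hp hq
  split_ifs at hp hq <;> simp_all

theorem stdBasis_sub_mem_PhiPos_iff {p q : Fin n} (hpq : p ≠ q) :
    stdBasis n p - stdBasis n q ∈ PhiPos n ↔ p < q := by
  refine ⟨?_, fun h => Or.inl ⟨p, q, h, rfl⟩⟩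
  rintro (⟨a, b, hab, h⟩ | ⟨a, b, -, h⟩)
  · obtain ⟨rfl, rfl⟩ := eq_of_stdBasis_sub_eq hpq hab.ne h
    exact hab
  · exact absurd h (stdBasis_sub_ne_add p q a b)

end Roots

section SignedPerm

variable {n : ℕ}

def IsSignedPerm (w : (Fin n → ℤ) ≃ₗ[ℤ] (Fin n → ℤ)) (σ₀ : Equiv.Perm (Fin n))
    (B : Finset (Fin n)) : Prop :=
  ∀ j, w (stdBasis n j) = if σ₀ j ∈ B then -stdBasis n (σ₀ j) else stdBasis n (σ₀ j)

/-- `x` comes before `y` in the word listing the letters outside `B` in increasing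
`σ₀⁻¹`-position, followed by the letters of `B` in decreasing `σ₀⁻¹`-position. -/
def Precedes (σ₀ : Equiv.Perm (Fin n)) (B : Finset (Fin n)) (x y : Fin n) : Prop :=
  x ∉ B ∧ y ∉ B ∧ σ₀.symm x < σ₀.symm y ∨ x ∉ B ∧ y ∈ B ∨
    x ∈ B ∧ y ∈ B ∧ σ₀.symm y < σ₀.symm x

instance (σ₀ : Equiv.Perm (Fin n)) (B : Finset (Fin n)) : Std.Asymm (Precedes σ₀ B) where
  asymm x y := by
    unfold Precedes
    rintro (⟨hx, hy, h⟩ | ⟨hx, hy⟩ | ⟨hx, hy, h⟩) (⟨hy', hx', h'⟩ | ⟨hy', hx'⟩ | ⟨hy', hx', h'⟩) <;>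
      first | contradiction | exact lt_asymm h h'

theorem precedes_empty_iff (σ : Equiv.Perm (Fin n)) (x y : Fin n) :
    Precedes σ ∅ x y ↔ σ.symm x < σ.symm y := by
  simp [Precedes]

theorem mem_PhiW_iff (w : (Fin n → ℤ) ≃ₗ[ℤ] (Fin n → ℤ)) (v : Fin n → ℤ) :
    v ∈ PhiW w ↔ -w.symm v ∈ PhiPos n ∧ v ∈ PhiPos n := by
  rw [PhiW, LinearEquiv.image_eq_preimage_symm, Set.mem_inter_iff, Set.mem_preimage,
    Set.mem_neg]

theorem IsSignedPerm.symm_stdBasis {w : (Fin n → ℤ) ≃ₗ[ℤ] (Fin n → ℤ)} {σ₀ : Equiv.Perm (Fin n)}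
    {B : Finset (Fin n)} (hw : IsSignedPerm w σ₀ B) (i : Fin n) :
    w.symm (stdBasis n i) =
      if i ∈ B then -stdBasis n (σ₀.symm i) else stdBasis n (σ₀.symm i) := by
  have h := hw (σ₀.symm i)
  rw [Equiv.apply_symm_apply] at h
  rw [LinearEquiv.symm_apply_eq]
  split_ifs at h ⊢ <;> simp [h]

theorem IsSignedPerm.stdBasis_sub_mem_PhiW_iff {w : (Fin n → ℤ) ≃ₗ[ℤ] (Fin n → ℤ)}
    {σ₀ : Equiv.Perm (Fin n)} {B : Finset (Fin n)} (hw : IsSignedPerm w σ₀ B) {i j : Fin n}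
    (hij : i < j) : stdBasis n i - stdBasis n j ∈ PhiW w ↔ Precedes σ₀ B j i := by
  have hne : σ₀.symm i ≠ σ₀.symm j := by simpa using hij.ne
  rw [mem_PhiW_iff, and_iff_left (show _ ∈ PhiPos n from Or.inl ⟨i, j, hij, rfl⟩), map_sub, hw.symm_stdBasis,
    hw.symm_stdBasis, Precedes]
  by_cases hi : i ∈ B <;> by_cases hj : j ∈ B
  · simp [hi, hj, neg_add_eq_sub, stdBasis_sub_mem_PhiPos_iff hne]
  · simp [hi, hj, stdBasis_add_mem_PhiPos]
  · simpa [hi, hj, ← sub_eq_add_neg] using neg_stdBasis_sub_not_mem_PhiPos _ _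
  · simp [hi, hj, stdBasis_sub_mem_PhiPos_iff hne.symm]

theorem permL_stdBasis (η : Equiv.Perm (Fin n)) (j : Fin n) :
    permL η (stdBasis n j) = stdBasis n (η j) := by
  ext i
  simp [permL, stdBasis, Pi.single_apply, Equiv.symm_apply_eq]

theorem isSignedPerm_permL (η : Equiv.Perm (Fin n)) : IsSignedPerm (permL η) η ∅ := fun j => by
  simp [permL_stdBasis]

theorem PhiW_permL_subset_Phi0 (η : Equiv.Perm (Fin n)) : PhiW (permL η) ⊆ Phi0 n := by
  intro v hv
  rw [mem_PhiW_iff] at hv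
  obtain ⟨hneg, h | ⟨i, j, -, rfl⟩⟩ := hv
  · exact h
  · simp only [map_add, (isSignedPerm_permL η).symm_stdBasis, Finset.notMem_empty, if_false,
      neg_add'] at hneg
    exact absurd hneg (neg_stdBasis_sub_not_mem_PhiPos _ _)

end SignedPerm

theorem pairwise_precedes {n : ℕ} (σ₀ : Equiv.Perm (Fin n)) (B : Finset (Fin n)) :
    (((List.finRange n).map σ₀).filter (fun x => x ∉ B) ++
      (((List.finRange n).map σ₀).filter (fun x => x ∈ B)).reverse).Pairwise
      (Precedes σ₀ B) := by
  have hs : ((List.finRange n).map σ₀).Pairwise (fun x y => σ₀.symm x < σ₀.symm y) := by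
    simpa [List.pairwise_map] using List.pairwise_lt_finRange n
  rw [List.pairwise_append, List.pairwise_reverse, List.pairwise_filter, List.pairwise_filter]
  refine ⟨hs.imp ?_, hs.imp ?_, ?_⟩
  · intro x y h hx hy
    exact Or.inl ⟨by simpa using hx, by simpa using hy, h⟩
  · intro x y h hx hy
    exact Or.inr (Or.inr ⟨by simpa using hy, by simpa using hx, h⟩)
  · intro x hx y hy
    simp only [List.mem_filter, decide_eq_true_eq, List.mem_reverse] at hx hy
    exact Or.inr (Or.inl ⟨hx.2, hy.2⟩)

theorem stmt6_general (n : ℕ) (w : (Fin n → ℤ) ≃ₗ[ℤ] (Fin n → ℤ))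
    (σ₀ : Equiv.Perm (Fin n)) (B : Finset (Fin n))
    (hw : ∀ j : Fin n, w (stdBasis n j) =
      if σ₀ j ∈ B then - stdBasis n (σ₀ j) else stdBasis n (σ₀ j))
    -- the one-line list of `η`: the entries of `s = (σ₀(1), …, σ₀(n))` not in `B`, in order,
    -- followed by the entries of `s` lying in `B`, in reverse order of appearance
    (L : List (Fin n))
    (hL : L = ((List.finRange n).map σ₀).filter (fun x => x ∉ B) ++
              (((List.finRange n).map σ₀).filter (fun x => x ∈ B)).reverse)
    (hlen : L.length = n)
    (η : Equiv.Perm (Fin n))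
    (hη : ∀ t : Fin n, η t = L.get (Fin.cast hlen.symm t)) :
    PhiW w ∩ Phi0 n = PhiW (permL η) := by
  have hsorted : ∀ t u, t < u → Precedes σ₀ B (η t) (η u) := fun t u htu => by
    rw [hη, hη]
    exact List.pairwise_iff_get.1 (hL ▸ pairwise_precedes σ₀ B) _ _ htu
  rw [← Set.inter_eq_left.2 (PhiW_permL_subset_Phi0 η)]
  refine Set.ext fun v => and_congr_left ?_
  rintro ⟨i, j, hij, rfl⟩
  rw [IsSignedPerm.stdBasis_sub_mem_PhiW_iff hw hij,
    (isSignedPerm_permL η).stdBasis_sub_mem_PhiW_iff hij, precedes_empty_iff,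
    lt_iff_of_forall_lt_imp hsorted, η.apply_symm_apply, η.apply_symm_apply]

theorem stmt6 (n : ℕ) (hn : 1 ≤ n) (w : (Fin n → ℤ) ≃ₗ[ℤ] (Fin n → ℤ))
    (σ₀ : Equiv.Perm (Fin n)) (B : Finset (Fin n))
    (hw : ∀ j : Fin n, w (stdBasis n j) =
      if σ₀ j ∈ B then - stdBasis n (σ₀ j) else stdBasis n (σ₀ j))
    -- the one-line list of `η`: the entries of `s = (σ₀(1), …, σ₀(n))` not in `B`, in order,
    -- followed by the entries of `s` lying in `B`, in reverse order of appearance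
    (L : List (Fin n))
    (hL : L = ((List.finRange n).map σ₀).filter (fun x => x ∉ B) ++
              (((List.finRange n).map σ₀).filter (fun x => x ∈ B)).reverse)
    (hlen : L.length = n)
    (η : Equiv.Perm (Fin n))
    (hη : ∀ t : Fin n, η t = L.get (Fin.cast hlen.symm t)) :
    PhiW w ∩ Phi0 n = PhiW (permL η) :=
  stmt6_general n w σ₀ B hw L hL hlen η hη
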